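/- No subgroup of the polycyclic group H₄ = ⟨r, a, b, z | r² = z, z central, a^r = a⁻¹, b^r = b⁻¹, b^a = bz²⟩ is isomorphic to ℤ³. Consequently the group P = ⟨a,b | b⁻¹a²b = a⁻², a⁻¹b²a = b⁻²⟩, which contains a subgroup isomorphic to ℤ³, is not isomorphic to any quotient of a subgroup of H₄. -/

import Mathlib

/-- Relators of the polycyclic group
`H₄ = ⟨r, a, b, z ∣ r² = z, z central, a^r = a⁻¹, b^r = b⁻¹, b^a = bz²⟩`
(`0 ↦ r`, `1 ↦ a`, `2 ↦ b`, `3 ↦ z`). -/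
def h4PcRels : Set (FreeGroup (Fin 4)) :=
  { FreeGroup.of 0 ^ 2 * (FreeGroup.of 3)⁻¹,
    FreeGroup.of 3 * FreeGroup.of 0 * (FreeGroup.of 3)⁻¹ * (FreeGroup.of 0)⁻¹,
    FreeGroup.of 3 * FreeGroup.of 1 * (FreeGroup.of 3)⁻¹ * (FreeGroup.of 1)⁻¹,
    FreeGroup.of 3 * FreeGroup.of 2 * (FreeGroup.of 3)⁻¹ * (FreeGroup.of 2)⁻¹,
    (FreeGroup.of 0)⁻¹ * FreeGroup.of 1 * FreeGroup.of 0 * FreeGroup.of 1,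
    (FreeGroup.of 0)⁻¹ * FreeGroup.of 2 * FreeGroup.of 0 * FreeGroup.of 2,
    (FreeGroup.of 1)⁻¹ * FreeGroup.of 2 * FreeGroup.of 1 *
      (FreeGroup.of 2 * FreeGroup.of 3 ^ 2)⁻¹ }

/-- The polycyclic group `H₄`. -/
abbrev H4Pc : Type := PresentedGroup h4PcRels

/-- Relators of `P = ⟨a, b ∣ b⁻¹a²b = a⁻², a⁻¹b²a = b⁻²⟩` (`0 ↦ a`, `1 ↦ b`). -/
def promislowRels : Set (FreeGroup (Fin 2)) :=
  { (FreeGroup.of 1)⁻¹ * (FreeGroup.of 0) ^ 2 * (FreeGroup.of 1) * (FreeGroup.of 0) ^ 2,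
    (FreeGroup.of 0)⁻¹ * (FreeGroup.of 1) ^ 2 * (FreeGroup.of 0) * (FreeGroup.of 1) ^ 2 }

/-- The Promislow group `P`. -/
abbrev PromislowGroup : Type := PresentedGroup promislowRels

/-!
Squares of elements of `H₄` lie in the index-two subgroup `S = ⟨a, b, z⟩`, whose elements have
normal form `a^α b^β z^γ`; on `S` the coordinates `(α, β)` are additive, their kernel is the
central infinite cyclic group `⟨z⟩`, and commutators are `[x, y] = z^(2 det)`. Suppose
`f : U → A` is a homomorphism to an abelian group and `f x₁, f x₂, f x₃` are linearly
independent; put `Xᵢ = xᵢ²`. An integer relation `v` between the `(α, β)`-coordinates of the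
`Xᵢ` makes the word `X^v` central with `f (X^v) = ∑ vᵢ • f Xᵢ ≠ 0`, and two central elements
`z^m, z^n` of `U` always satisfy `n • f (z^m) = m • f (z^n)`. Comparing `X^v` with the
commutators `[Xᵢ, Xⱼ]`, which `f` kills, makes every `2 × 2` minor of the coordinate matrix
vanish; there is then a second relation `w ⊥ v`, and comparing `X^v` with `X^w` forces `w = 0`.
So no subgroup of `H₄` maps onto `ℤ³`. In `P` the squares `a², b², (ab)²` commute and act on `ℤ³`
as independent translations, so they span a copy of `ℤ³`, whose preimage under a surjection from
a subgroup of `H₄` onto `P` would map onto `ℤ³`.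
-/

open Function
open scoped Matrix commutatorElement

theorem LinearIndependent.const_smul {ι R M : Type*} [Ring R] [NoZeroDivisors R]
    [AddCommGroup M] [Module R M] {v : ι → M} (hv : LinearIndependent R v) {c : R} (hc : c ≠ 0) :
    LinearIndependent R (c • v) := by
  rw [linearIndependent_iff'] at hv ⊢
  intro s g hg i hi
  have := hv s (fun i => g i * c) (by simpa [mul_smul] using hg) i hi
  exact (mul_eq_zero.1 this).resolve_right hc

lemma exists_ne_zero_orthogonal_of_triple_product_eq_zero {R : Type*} [CommRing R] [IsDomain R]
    {r s u : Fin 3 → R} (h : u ⬝ᵥ r ⨯₃ s = 0) :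
    ∃ w ≠ 0, r ⬝ᵥ w = 0 ∧ s ⬝ᵥ w = 0 ∧ u ⬝ᵥ w = 0 := by
  rw [triple_product_eq_det] at h
  obtain ⟨w, hw, hMw⟩ := Matrix.exists_mulVec_eq_zero_iff.mpr h
  refine ⟨w, hw, congrFun hMw 1, congrFun hMw 2, congrFun hMw 0⟩

def zpowWord {G : Type*} [Group G] (X : Fin 3 → G) (v : Fin 3 → ℤ) : G :=
  X 0 ^ v 0 * X 1 ^ v 1 * X 2 ^ v 2

lemma map_zpowWord {G H : Type*} [Group G] [Group H] (φ : G →* H) (X : Fin 3 → G) (v : Fin 3 → ℤ) :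
    φ (zpowWord X v) = zpowWord (φ ∘ X) v := by
  simp [zpowWord]

lemma toAdd_zpowWord {G A : Type*} [Group G] [AddCommGroup A] (f : G →* Multiplicative A)
    (X : Fin 3 → G) (v : Fin 3 → ℤ) :
    (f (zpowWord X v)).toAdd = Fintype.linearCombination ℤ (fun i => (f (X i)).toAdd) v := by
  simp [zpowWord, Fintype.linearCombination_apply, Fin.sum_univ_three]

lemma commute_sq_of_semiconjBy_inv {G : Type*} [Group G] {g x : G} (h : SemiconjBy g x⁻¹ x) :
    Commute (g ^ 2) x := by
  rw [sq]
  exact h.mul_left (by simpa using h.inv_right)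

def zpowHom3 {G : Type*} [Group G] {x y w : G} (hxy : Commute x y) (hxw : Commute x w)
    (hyw : Commute y w) : Multiplicative (ℤ × ℤ × ℤ) →* G where
  toFun v := x ^ v.toAdd.1 * y ^ v.toAdd.2.1 * w ^ v.toAdd.2.2
  map_one' := by simp
  map_mul' v v' := by
    simp only [toAdd_mul, Prod.fst_add, Prod.snd_add, zpow_add]
    rw [((hxw.symm.zpow_zpow _ _).mul_right (hyw.symm.zpow_zpow _ _)).mul_mul_mul_comm,
      (hxy.symm.zpow_zpow _ _).mul_mul_mul_comm]

/-- `⟨e, α, β, γ⟩` stands for the normal form `r ^ e * a ^ α * b ^ β * z ^ γ` of `H₄`,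
with `e` read as `0` or `1`. -/
@[ext] structure H4Model where
  r : Bool
  a : ℤ
  b : ℤ
  z : ℤ

namespace H4Model

def sgn (e : Bool) : ℤ := cond e (-1) 1

@[simp] lemma sgn_false : sgn false = 1 := rfl
@[simp] lemma sgn_true : sgn true = -1 := rfl

/- Moving `r ^ e'` to the left negates `α` and `β`, `r * r = z`, and
`b ^ β * a ^ α' = a ^ α' * b ^ β * z ^ (2 * β * α')`. -/
instance : Mul H4Model :=
  ⟨fun x y => ⟨xor x.r y.r, sgn y.r * x.a + y.a, sgn y.r * x.b + y.b,
    x.z + y.z + 2 * sgn y.r * x.b * y.a + cond (x.r && y.r) 1 0⟩⟩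

instance : One H4Model := ⟨⟨false, 0, 0, 0⟩⟩

instance : Inv H4Model :=
  ⟨fun x => ⟨x.r, -(sgn x.r * x.a), -(sgn x.r * x.b), 2 * x.b * x.a - x.z - cond x.r 1 0⟩⟩

@[simp] lemma mul_r (x y : H4Model) : (x * y).r = xor x.r y.r := rfl
@[simp] lemma mul_a (x y : H4Model) : (x * y).a = sgn y.r * x.a + y.a := rfl
@[simp] lemma mul_b (x y : H4Model) : (x * y).b = sgn y.r * x.b + y.b := rfl
@[simp] lemma mul_z (x y : H4Model) :
    (x * y).z = x.z + y.z + 2 * sgn y.r * x.b * y.a + cond (x.r && y.r) 1 0 := rfl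
@[simp] lemma one_r : (1 : H4Model).r = false := rfl
@[simp] lemma one_a : (1 : H4Model).a = 0 := rfl
@[simp] lemma one_b : (1 : H4Model).b = 0 := rfl
@[simp] lemma one_z : (1 : H4Model).z = 0 := rfl
@[simp] lemma inv_r (x : H4Model) : x⁻¹.r = x.r := rfl
@[simp] lemma inv_a (x : H4Model) : x⁻¹.a = -(sgn x.r * x.a) := rfl
@[simp] lemma inv_b (x : H4Model) : x⁻¹.b = -(sgn x.r * x.b) := rfl
@[simp] lemma inv_z (x : H4Model) : x⁻¹.z = 2 * x.b * x.a - x.z - cond x.r 1 0 := rfl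

instance : Group H4Model :=
  Group.ofLeftAxioms
    (fun ⟨e, _, _, _⟩ ⟨e', _, _, _⟩ ⟨e'', _, _, _⟩ => by
      cases e <;> cases e' <;> cases e'' <;> ext <;> simp <;> ring)
    (fun x => by ext <;> simp)
    (fun ⟨e, _, _, _⟩ => by cases e <;> ext <;> simp; ring)

def zn (u : ℤ) : H4Model := ⟨false, 0, 0, u⟩

lemma zpow_of_r_eq_false {x : H4Model} (hx : x.r = false) (k : ℤ) :
    x ^ k = ⟨false, k * x.a, k * x.b, k * x.z + k * (k - 1) * x.a * x.b⟩ := by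
  induction k using Int.induction_on with
  | zero => ext <;> simp
  | succ n ih => rw [zpow_add_one, ih]; ext <;> simp [hx] <;> ring
  | pred n ih => rw [zpow_sub_one, ih]; ext <;> simp [hx] <;> ring

lemma zn_zpow (u k : ℤ) : zn u ^ k = zn (k * u) := by
  rw [zpow_of_r_eq_false rfl]; simp [zn]

lemma eq_zn_z {x : H4Model} (hr : x.r = false) (ha : x.a = 0) (hb : x.b = 0) : x = zn x.z := by
  ext <;> simp [zn, hr, ha, hb]

lemma commutatorElement_eq_zn {x y : H4Model} (hx : x.r = false) (hy : y.r = false) :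
    ⁅x, y⁆ = zn (2 * (x.b * y.a - x.a * y.b)) := by
  ext <;> simp [commutatorElement_def, zn, hx, hy]; ring

lemma zpowWord_eq_zn {Y : Fin 3 → H4Model} (hY : ∀ i, (Y i).r = false) {v : Fin 3 → ℤ}
    (ha : a ∘ Y ⬝ᵥ v = 0) (hb : b ∘ Y ⬝ᵥ v = 0) :
    zpowWord Y v = zn (zpowWord Y v).z := by
  simp only [dotProduct, Fin.sum_univ_three, Function.comp_apply] at ha hb
  apply eq_zn_z <;> simp [zpowWord, zpow_of_r_eq_false, hY]
  · linear_combination ha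
  · linear_combination hb

variable {G A : Type*} [Group G] [AddCommGroup A] {ι : G →* H4Model}

lemma smul_toAdd_eq_of_map_eq_zn (hι : Injective ι) (f : G →* Multiplicative A) {g g' : G}
    {m n : ℤ} (hg : ι g = zn m) (hg' : ι g' = zn n) : n • (f g).toAdd = m • (f g').toAdd := by
  have : g ^ n = g' ^ m := hι (by simp [hg, hg', zn_zpow, mul_comm])
  simpa using congrArg (fun g => (f g).toAdd) this

lemma map_zpowWord_eq_zn {X : Fin 3 → G} (hX : ∀ i, (ι (X i)).r = false) {v : Fin 3 → ℤ}
    (ha : a ∘ ι ∘ X ⬝ᵥ v = 0) (hb : b ∘ ι ∘ X ⬝ᵥ v = 0) :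
    ι (zpowWord X v) = zn (ι (zpowWord X v)).z := by
  rw [map_zpowWord]
  exact zpowWord_eq_zn hX ha hb

lemma cross_ab_eq_zero (hι : Injective ι) (f : G →* Multiplicative A) {X : Fin 3 → G}
    (hX : ∀ i, (ι (X i)).r = false) (hli : LinearIndependent ℤ fun i => (f (X i)).toAdd)
    {v : Fin 3 → ℤ} (hv : v ≠ 0) (ha : a ∘ ι ∘ X ⬝ᵥ v = 0) (hb : b ∘ ι ∘ X ⬝ᵥ v = 0) :
    a ∘ ι ∘ X ⨯₃ b ∘ ι ∘ X = 0 := by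
  have hminor (i j : Fin 3) : (ι (X i)).b * (ι (X j)).a - (ι (X i)).a * (ι (X j)).b = 0 := by
    have hcomm := commutatorElement_eq_zn (hX i) (hX j)
    rw [← map_commutatorElement] at hcomm
    have key := smul_toAdd_eq_of_map_eq_zn hι f (map_zpowWord_eq_zn hX ha hb) hcomm
    have hf : (f ⁅X i, X j⁆).toAdd = 0 := by simp [commutatorElement_def]
    rw [hf, smul_zero, toAdd_zpowWord, ← map_zsmul] at key
    simpa [hv] using
      smul_eq_zero.1 (hli.fintypeLinearCombination_injective (key.trans (map_zero _).symm))
  ext k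
  fin_cases k <;> simp [cross_apply] <;> linarith [hminor 1 2, hminor 2 0, hminor 0 1]

lemma eq_zero_of_dotProduct_eq_zero (hι : Injective ι) (f : G →* Multiplicative A)
    {X : Fin 3 → G} (hX : ∀ i, (ι (X i)).r = false)
    (hli : LinearIndependent ℤ fun i => (f (X i)).toAdd) {v w : Fin 3 → ℤ} (hv : v ≠ 0)
    (hav : a ∘ ι ∘ X ⬝ᵥ v = 0) (hbv : b ∘ ι ∘ X ⬝ᵥ v = 0)
    (haw : a ∘ ι ∘ X ⬝ᵥ w = 0) (hbw : b ∘ ι ∘ X ⬝ᵥ w = 0) (hvw : v ⬝ᵥ w = 0) : w = 0 := by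
  have hΛ := hli.fintypeLinearCombination_injective
  have hw := map_zpowWord_eq_zn hX haw hbw
  have key := smul_toAdd_eq_of_map_eq_zn hι f (map_zpowWord_eq_zn hX hav hbv) hw
  simp only [toAdd_zpowWord, ← map_zsmul] at key
  have hn := congrArg (· ⬝ᵥ v) (hΛ key)
  simp only [smul_dotProduct, dotProduct_comm w, hvw, smul_eq_mul, mul_zero, mul_eq_zero,
    dotProduct_self_eq_zero, hv, or_false] at hn
  have hw1 : zpowWord X w = 1 := hι (by rw [hw, hn, map_one]; rfl)
  apply hΛ
  rw [← toAdd_zpowWord, hw1, map_zero, map_one, toAdd_one]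

theorem not_linearIndependent (hι : Injective ι) (f : G →* Multiplicative A) (x : Fin 3 → G) :
    ¬ LinearIndependent ℤ fun i => (f (x i)).toAdd := by
  intro hx
  set X : Fin 3 → G := fun i => x i ^ 2
  have hX : ∀ i, (ι (X i)).r = false := by simp [X, sq]
  have hli : LinearIndependent ℤ fun i => (f (X i)).toAdd := by
    have hX2 : (fun i => (f (X i)).toAdd) = (2 : ℤ) • fun i => (f (x i)).toAdd := by
      ext i
      simp [X, two_zsmul, two_nsmul]
    rw [hX2]
    exact hx.const_smul two_ne_zero
  obtain ⟨v, hv, hav, hbv, -⟩ :=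
    exists_ne_zero_orthogonal_of_triple_product_eq_zero (r := a ∘ ι ∘ X) (s := b ∘ ι ∘ X)
      (u := 0) (by simp)
  have hcross := cross_ab_eq_zero hι f hX hli hv hav hbv
  obtain ⟨w, hw, haw, hbw, hvw⟩ :=
    exists_ne_zero_orthogonal_of_triple_product_eq_zero (u := v) (by rw [hcross, dotProduct_zero])
  exact hw (eq_zero_of_dotProduct_eq_zero hι f hX hli hv hav hbv haw hbw hvw)

end H4Model

namespace H4Pc

def r : H4Pc := PresentedGroup.of 0
def a : H4Pc := PresentedGroup.of 1
def b : H4Pc := PresentedGroup.of 2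
def z : H4Pc := PresentedGroup.of 3

lemma r_sq : r ^ 2 = z :=
  mul_inv_eq_one.1 <| PresentedGroup.one_of_mem (x := FreeGroup.of 0 ^ 2 * (FreeGroup.of 3)⁻¹)
    (by simp [h4PcRels])

lemma commute_z_r : Commute z r :=
  commutatorElement_eq_one_iff_commute.1 <| PresentedGroup.one_of_mem
    (x := FreeGroup.of 3 * FreeGroup.of 0 * (FreeGroup.of 3)⁻¹ * (FreeGroup.of 0)⁻¹)
    (by simp [h4PcRels])

lemma commute_z_a : Commute z a :=
  commutatorElement_eq_one_iff_commute.1 <| PresentedGroup.one_of_mem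
    (x := FreeGroup.of 3 * FreeGroup.of 1 * (FreeGroup.of 3)⁻¹ * (FreeGroup.of 1)⁻¹)
    (by simp [h4PcRels])

lemma commute_z_b : Commute z b :=
  commutatorElement_eq_one_iff_commute.1 <| PresentedGroup.one_of_mem
    (x := FreeGroup.of 3 * FreeGroup.of 2 * (FreeGroup.of 3)⁻¹ * (FreeGroup.of 2)⁻¹)
    (by simp [h4PcRels])

lemma semiconjBy_r_a : SemiconjBy r a⁻¹ a := by
  have h := PresentedGroup.one_of_mem (rels := h4PcRels)
    (x := (FreeGroup.of 0)⁻¹ * FreeGroup.of 1 * FreeGroup.of 0 * FreeGroup.of 1)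
    (by simp [h4PcRels])
  change r⁻¹ * a * r * a = 1 at h
  calc r * a⁻¹ = r * (r⁻¹ * a * r * a) * a⁻¹ := by rw [h, mul_one]
    _ = a * r := by group

lemma semiconjBy_r_b : SemiconjBy r b⁻¹ b := by
  have h := PresentedGroup.one_of_mem (rels := h4PcRels)
    (x := (FreeGroup.of 0)⁻¹ * FreeGroup.of 2 * FreeGroup.of 0 * FreeGroup.of 2)
    (by simp [h4PcRels])
  change r⁻¹ * b * r * b = 1 at h
  calc r * b⁻¹ = r * (r⁻¹ * b * r * b) * b⁻¹ := by rw [h, mul_one]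
    _ = b * r := by group

lemma semiconjBy_a_b : SemiconjBy a (b * z ^ 2) b := by
  have h := PresentedGroup.one_of_mem (rels := h4PcRels)
    (x := (FreeGroup.of 1)⁻¹ * FreeGroup.of 2 * FreeGroup.of 1 *
      (FreeGroup.of 2 * FreeGroup.of 3 ^ 2)⁻¹) (by simp [h4PcRels])
  change a⁻¹ * b * a * (b * z ^ 2)⁻¹ = 1 at h
  calc a * (b * z ^ 2) = a * (a⁻¹ * b * a) := by rw [mul_inv_eq_one.1 h]
    _ = b * a := by group

lemma commute_z (g : H4Pc) : Commute z g := by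
  suffices g ∈ Subgroup.centralizer {z} from (Subgroup.mem_centralizer_singleton_iff.1 this).symm
  refine PresentedGroup.generated_by _ _ (fun i => ?_) g
  rw [Subgroup.mem_centralizer_singleton_iff]
  fin_cases i
  exacts [commute_z_r.symm, commute_z_a.symm, commute_z_b.symm, rfl]

def nf (m : H4Model) : H4Pc := cond m.r r 1 * a ^ m.a * b ^ m.b * z ^ m.z

lemma nf_mul_z (m : H4Model) : nf m * z = nf (m * H4Model.zn 1) := by
  have : m * H4Model.zn 1 = ⟨m.r, m.a, m.b, m.z + 1⟩ := by ext <;> simp [H4Model.zn]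
  rw [this, nf, nf, mul_assoc, ← zpow_add_one]

lemma nf_mul_b (m : H4Model) : nf m * b = nf (m * ⟨false, 0, 1, 0⟩) := by
  have : m * ⟨false, 0, 1, 0⟩ = ⟨m.r, m.a, m.b + 1, m.z⟩ := by ext <;> simp
  rw [this, nf, nf, mul_assoc, ((commute_z b).zpow_left _).eq, ← mul_assoc, mul_assoc _ (b ^ _),
    ← zpow_add_one]

lemma zpow_b_mul_a (n : ℤ) : b ^ n * a = a * (b ^ n * z ^ (2 * n)) := by
  rw [← (semiconjBy_a_b.zpow_right n).eq, ((commute_z b).symm.pow_right 2).mul_zpow, ← zpow_natCast,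
    ← zpow_mul, Nat.cast_ofNat]

lemma nf_mul_a (m : H4Model) : nf m * a = nf (m * ⟨false, 1, 0, 0⟩) := by
  have : m * ⟨false, 1, 0, 0⟩ = ⟨m.r, m.a + 1, m.b, m.z + 2 * m.b⟩ := by ext <;> simp
  simp only [this, nf]
  calc _ = cond m.r r 1 * a ^ m.a * (b ^ m.b * a) * z ^ m.z := by
        rw [mul_assoc _ (z ^ _), ((commute_z a).zpow_left _).eq]; group
    _ = _ := by rw [zpow_b_mul_a, zpow_add, zpow_add]; group

lemma zpow_a_mul_r (n : ℤ) : a ^ n * r = r * a ^ (-n) := by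
  rw [zpow_neg, ← inv_zpow, (semiconjBy_r_a.zpow_right n).eq]

lemma zpow_b_mul_r (n : ℤ) : b ^ n * r = r * b ^ (-n) := by
  rw [zpow_neg, ← inv_zpow, (semiconjBy_r_b.zpow_right n).eq]

lemma nf_mul_r (m : H4Model) : nf m * r = nf (m * ⟨true, 0, 0, 0⟩) := by
  obtain ⟨e, α, β, γ⟩ := m
  have h (c : H4Pc) : c * a ^ α * b ^ β * z ^ γ * r = c * r * a ^ (-α) * b ^ (-β) * z ^ γ := by
    rw [mul_assoc _ (z ^ γ), ((commute_z r).zpow_left γ).eq, ← mul_assoc, mul_assoc _ (b ^ β),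
      zpow_b_mul_r, ← mul_assoc, mul_assoc _ (a ^ α), zpow_a_mul_r]
    group
  cases e
  · simpa [nf] using h 1
  · calc nf _ * r = z * (a ^ (-α) * b ^ (-β) * z ^ γ) := by
          rw [nf, cond_true, h, ← sq, r_sq]; group
      _ = a ^ (-α) * b ^ (-β) * z ^ γ * z := (commute_z _).eq
      _ = nf _ := by simp [nf, zpow_add_one, mul_assoc]

def toModel : H4Pc →* H4Model :=
  PresentedGroup.toGroup (f := ![⟨true, 0, 0, 0⟩, ⟨false, 1, 0, 0⟩, ⟨false, 0, 1, 0⟩, H4Model.zn 1])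
    (by
      intro w hw
      simp only [h4PcRels, Set.mem_insert_iff, Set.mem_singleton_iff] at hw
      rcases hw with rfl | rfl | rfl | rfl | rfl | rfl | rfl <;> ext <;> simp [H4Model.zn, sq])

lemma nf_mul (m : H4Model) (g : H4Pc) : nf m * g = nf (m * toModel g) := by
  have hg : g ∈ Subgroup.closure (Set.range PresentedGroup.of) := by simp
  induction hg using Subgroup.closure_induction generalizing m with
  | mem _ h =>
    obtain ⟨i, rfl⟩ := h
    fin_cases i
    exacts [nf_mul_r m, nf_mul_a m, nf_mul_b m, nf_mul_z m]
  | one => simp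
  | mul g g' _ _ ih ih' => rw [← mul_assoc, ih, ih', map_mul, mul_assoc]
  | inv g _ ih => rw [map_inv, mul_inv_eq_iff_eq_mul, ih, inv_mul_cancel_right]

lemma nf_toModel (g : H4Pc) : nf (toModel g) = g := by
  simpa [nf] using (nf_mul 1 g).symm

lemma toModel_injective : Injective toModel :=
  LeftInverse.injective nf_toModel

theorem not_surjective {G : Type*} [Group G] {ι : G →* H4Pc} (hι : Injective ι)
    (f : G →* Multiplicative (ℤ × ℤ × ℤ)) : ¬ Surjective f := by
  intro hf
  let e : Fin 3 → ℤ × ℤ × ℤ := ![(1, 0, 0), (0, 1, 0), (0, 0, 1)]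
  choose x hx using fun i => hf (.ofAdd (e i))
  refine H4Model.not_linearIndependent (ι := toModel.comp ι) (toModel_injective.comp hι) f x ?_
  simp only [hx, toAdd_ofAdd]
  refine Fintype.linearIndependent_iff.2 fun c hc i => ?_
  have : c 0 = 0 ∧ c 1 = 0 ∧ c 2 = 0 := by simpa [Fin.sum_univ_three, e, Prod.ext_iff] using hc
  fin_cases i <;> simp [this]

end H4Pc

namespace PromislowGroup

def a : PromislowGroup := PresentedGroup.of 0
def b : PromislowGroup := PresentedGroup.of 1

lemma semiconjBy_b_a_sq : SemiconjBy b (a ^ 2)⁻¹ (a ^ 2) := by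
  have h := PresentedGroup.one_of_mem (rels := promislowRels)
    (x := (FreeGroup.of 1)⁻¹ * (FreeGroup.of 0) ^ 2 * (FreeGroup.of 1) * (FreeGroup.of 0) ^ 2)
    (by simp [promislowRels])
  change b⁻¹ * a ^ 2 * b * a ^ 2 = 1 at h
  calc b * (a ^ 2)⁻¹ = b * (b⁻¹ * a ^ 2 * b * a ^ 2) * (a ^ 2)⁻¹ := by rw [h, mul_one]
    _ = a ^ 2 * b := by group

lemma semiconjBy_a_b_sq : SemiconjBy a (b ^ 2)⁻¹ (b ^ 2) := by
  have h := PresentedGroup.one_of_mem (rels := promislowRels)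
    (x := (FreeGroup.of 0)⁻¹ * (FreeGroup.of 1) ^ 2 * (FreeGroup.of 0) * (FreeGroup.of 1) ^ 2)
    (by simp [promislowRels])
  change a⁻¹ * b ^ 2 * a * b ^ 2 = 1 at h
  calc a * (b ^ 2)⁻¹ = a * (a⁻¹ * b ^ 2 * a * b ^ 2) * (b ^ 2)⁻¹ := by rw [h, mul_one]
    _ = b ^ 2 * a := by group

lemma commute_a_sq_b_sq : Commute (a ^ 2) (b ^ 2) :=
  commute_sq_of_semiconjBy_inv semiconjBy_a_b_sq

lemma commute_a_sq_ab_sq : Commute (a ^ 2) ((a * b) ^ 2) :=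
  (commute_sq_of_semiconjBy_inv (SemiconjBy.mul_left (Commute.self_pow a 2) semiconjBy_b_a_sq)).symm

lemma commute_b_sq_ab_sq : Commute (b ^ 2) ((a * b) ^ 2) :=
  (commute_sq_of_semiconjBy_inv (semiconjBy_a_b_sq.mul_left (Commute.self_pow b 2).inv_right)).symm

def toZ3 : Multiplicative (ℤ × ℤ × ℤ) →* PromislowGroup :=
  zpowHom3 commute_a_sq_b_sq commute_a_sq_ab_sq commute_b_sq_ab_sq

/-- `P` is the Hantzsche–Wendt group; `a` and `b` act on `ℤ³` by these screw motions. -/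
def actA : Equiv.Perm (ℤ × ℤ × ℤ) where
  toFun p := (p.1 + 1, -p.2.1, -p.2.2)
  invFun p := (p.1 - 1, -p.2.1, -p.2.2)
  left_inv _ := by simp
  right_inv _ := by simp

def actB : Equiv.Perm (ℤ × ℤ × ℤ) where
  toFun p := (-p.1, p.2.1 + 1, 1 - p.2.2)
  invFun p := (-p.1, p.2.1 - 1, 1 - p.2.2)
  left_inv _ := by simp
  right_inv _ := by simp

def toPerm : PromislowGroup →* Equiv.Perm (ℤ × ℤ × ℤ) :=
  PresentedGroup.toGroup (f := ![actA, actB]) (by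
    intro w hw
    simp only [promislowRels, Set.mem_insert_iff, Set.mem_singleton_iff] at hw
    rcases hw with rfl | rfl <;> ext ⟨x, y, z⟩ <;> simp [actA, actB, sq, Equiv.Perm.mul_apply])

lemma toPerm_toZ3 (v : Multiplicative (ℤ × ℤ × ℤ)) :
    toPerm (toZ3 v) = Equiv.addLeft (2 * v.toAdd.1, 2 * v.toAdd.2.1, -2 * v.toAdd.2.2) := by
  have ha : toPerm (a ^ 2) = Equiv.addLeft (2, 0, 0) := by
    ext ⟨x, y, z⟩ <;> simp [toPerm, a, actA, sq, Equiv.Perm.mul_apply]; ring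
  have hb : toPerm (b ^ 2) = Equiv.addLeft (0, 2, 0) := by
    ext ⟨x, y, z⟩ <;> simp [toPerm, b, actB, sq, Equiv.Perm.mul_apply]; ring
  have hab : toPerm ((a * b) ^ 2) = Equiv.addLeft (0, 0, -2) := by
    ext ⟨x, y, z⟩ <;> simp [toPerm, a, b, actA, actB, sq, Equiv.Perm.mul_apply]; ring
  simp only [toZ3, zpowHom3, MonoidHom.coe_mk, OneHom.coe_mk, map_mul, map_zpow, ha, hb, hab,
    Equiv.zsmul_addLeft, ← Equiv.addLeft_add]
  congr 1
  ext <;> simp <;> ring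

lemma toZ3_injective : Injective toZ3 := by
  refine (injective_iff_map_eq_one _).2 fun v hv => ?_
  rw [← toAdd_eq_zero]
  simpa [toPerm_toZ3, Prod.ext_iff, -toAdd_eq_zero] using congrArg (fun g => toPerm g 0) hv

end PromislowGroup

/-- No subgroup of the polycyclic group `H₄` is isomorphic to `ℤ³`.  Consequently the
group `P`, which contains a subgroup isomorphic to `ℤ³`, is not isomorphic to any
quotient of a subgroup of `H₄` (equivalently, no subgroup of `H₄` surjects onto `P`). -/
theorem h4Pc_no_Z3_subgroup_and_P_not_quotient :
    (∀ U : Subgroup H4Pc, ¬ Nonempty (U ≃* Multiplicative (ℤ × ℤ × ℤ))) ∧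
    (∃ V : Subgroup PromislowGroup, Nonempty (V ≃* Multiplicative (ℤ × ℤ × ℤ))) ∧
    ∀ (U : Subgroup H4Pc) (f : U →* PromislowGroup), ¬ Function.Surjective f := by
  have eZ3 := (MonoidHom.ofInjective PromislowGroup.toZ3_injective).symm
  refine ⟨fun U ⟨e⟩ => H4Pc.not_surjective U.subtype_injective e.toMonoidHom e.surjective,
    ⟨_, ⟨eZ3⟩⟩, fun U f hf => ?_⟩
  let K := PromislowGroup.toZ3.range
  exact H4Pc.not_surjective (ι := U.subtype.comp (K.comap f).subtype)
    (U.subtype_injective.comp (K.comap f).subtype_injective)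
    (eZ3.toMonoidHom.comp (f.subgroupComap K))
    (eZ3.surjective.comp (f.subgroupComap_surjective_of_surjective K hf))
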